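/- Soundness of the first-order resolution rule: if an interpretation satisfies (the universal closures of) the clauses Γ_L′ ∪ {ℓ_L} and Γ_R′ ∪ {ℓ_R}, and σ_L, σ_R are substitutions with ℓ_Lσ_L equal to the complement of ℓ_Rσ_R, then the interpretation satisfies the resolvent Γ_L′σ_L ∪ Γ_R′σ_R. -/

import Mathlib

/-- First-order terms over variables `V` and function symbols `F`.
Constants are nullary functions. -/
inductive Trm (V F : Type) : Type
  | var : V → Trm V F
  | fn  : F → List (Trm V F) → Trm V F

/-- Substitutions map variables to terms. -/
abbrev Subst (V F : Type) := V → Trm V F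

/-- Apply a substitution to a term. -/
def Trm.subst {V F : Type} (σ : Subst V F) : Trm V F → Trm V F
  | .var x => σ x
  | .fn f ts => .fn f (ts.attach.map (fun ⟨t, _⟩ => t.subst σ))

/-- Free variables of a term. -/
def Trm.fv {V F : Type} : Trm V F → Set V
  | .var x => {x}
  | .fn _ ts => ts.attach.foldr (fun ⟨t, _⟩ s => t.fv ∪ s) ∅

/-- Composition of substitutions: apply `σ` first, then `τ`. -/
def Subst.comp {V F : Type} (σ τ : Subst V F) : Subst V F := fun x => (σ x).subst τ

/-- Atomic formulas. -/
structure Atm (V F P : Type) where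
  pred : P
  args : List (Trm V F)

/-- Literals: atoms or negated atoms. -/
inductive Lit (V F P : Type)
  | pos : Atm V F P → Lit V F P
  | neg : Atm V F P → Lit V F P

def Atm.subst {V F P : Type} (σ : Subst V F) (a : Atm V F P) : Atm V F P :=
  ⟨a.pred, a.args.map (Trm.subst σ)⟩

def Lit.subst {V F P : Type} (σ : Subst V F) : Lit V F P → Lit V F P
  | .pos a => .pos (a.subst σ)
  | .neg a => .neg (a.subst σ)

/-- The complement of a literal. -/
def Lit.compl {V F P : Type} : Lit V F P → Lit V F P
  | .pos a => .neg a
  | .neg a => .pos a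

/-- The underlying atom of a literal. -/
def Lit.atom {V F P : Type} : Lit V F P → Atm V F P
  | .pos a => a
  | .neg a => a

/-- Free variables of a literal. -/
def Lit.fv {V F P : Type} (ℓ : Lit V F P) : Set V :=
  ℓ.atom.args.foldr (fun t s => t.fv ∪ s) ∅

/-- Clauses as sets of literals. -/
abbrev Clause (V F P : Type) := Set (Lit V F P)

def Clause.subst {V F P : Type} (σ : Subst V F) (C : Clause V F P) : Clause V F P :=
  (Lit.subst σ) '' C

/-- Subsumption: `X` subsumes `Y` iff some instance of `X` is included in `Y`. -/
def Subsumes {V F P : Type} (X Y : Clause V F P) : Prop :=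
  ∃ σ : Subst V F, Clause.subst σ X ⊆ Y

/-- A first-order interpretation with domain `D`. -/
structure Interp (F P D : Type) where
  fn : F → List D → D
  pr : P → List D → Prop

/-- Evaluation of a term in an interpretation under a variable assignment. -/
def Trm.eval {V F P D : Type} (I : Interp F P D) (ρ : V → D) : Trm V F → D
  | .var x => ρ x
  | .fn f ts => I.fn f (ts.attach.map (fun ⟨t, _⟩ => t.eval I ρ))

/-- Truth of a literal in an interpretation under a variable assignment. -/
def Lit.eval {V F P D : Type} (I : Interp F P D) (ρ : V → D) : Lit V F P → Prop
  | .pos a => I.pr a.pred (a.args.map (Trm.eval I ρ))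
  | .neg a => ¬ I.pr a.pred (a.args.map (Trm.eval I ρ))

/-- An interpretation satisfies (the universal closure of) a clause:
under every variable assignment some literal of the clause is true. -/
def Sat {V F P D : Type} (I : Interp F P D) (C : Clause V F P) : Prop :=
  ∀ ρ : V → D, ∃ ℓ ∈ C, Lit.eval I ρ ℓ

/-! Instantiating a clause with `σ` and evaluating under `ρ` is the same as evaluating the
original clause under the assignment `x ↦ ⟦σ x⟧ρ`, so every instance of a satisfied clause is
satisfied. After instantiating both premises, the resolved literals `ℓL σL` and `ℓR σR` are
complementary and cannot both be true under one assignment, so one of the premises must be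
satisfied by a literal of its remaining part. -/

theorem Trm.subst_fn {V F : Type} (σ : Subst V F) (f : F) (ts : List (Trm V F)) :
    (Trm.fn f ts).subst σ = Trm.fn f (ts.map (Trm.subst σ)) := by
  rw [Trm.subst, List.attach_map_val]

theorem Trm.eval_fn {V F P D : Type} (I : Interp F P D) (ρ : V → D) (f : F)
    (ts : List (Trm V F)) :
    (Trm.fn f ts).eval I ρ = I.fn f (ts.map (Trm.eval I ρ)) := by
  rw [Trm.eval, List.attach_map_val]

theorem Trm.eval_subst {V F P D : Type} (I : Interp F P D) (ρ : V → D) (σ : Subst V F) :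
    ∀ t : Trm V F, (t.subst σ).eval I ρ = t.eval I (fun x => (σ x).eval I ρ)
  | .var x => by rw [Trm.subst, Trm.eval]
  | .fn f ts => by
    rw [Trm.subst_fn, Trm.eval_fn, Trm.eval_fn, List.map_map]
    exact congrArg _ (List.map_congr_left fun t _ => Trm.eval_subst I ρ σ t)

theorem Lit.eval_subst {V F P D : Type} (I : Interp F P D) (ρ : V → D) (σ : Subst V F)
    (ℓ : Lit V F P) : (ℓ.subst σ).eval I ρ ↔ ℓ.eval I (fun x => (σ x).eval I ρ) := by
  cases ℓ <;>
    simp only [Lit.subst, Lit.eval, Atm.subst, List.map_map, Function.comp_def,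
      Trm.eval_subst I ρ σ]

theorem Lit.eval_compl {V F P D : Type} (I : Interp F P D) (ρ : V → D) (ℓ : Lit V F P) :
    ℓ.compl.eval I ρ ↔ ¬ ℓ.eval I ρ := by
  cases ℓ <;> simp only [Lit.compl, Lit.eval, not_not]

theorem Clause.subst_union_singleton {V F P : Type} (σ : Subst V F) (Γ : Clause V F P)
    (ℓ : Lit V F P) : Clause.subst σ (Γ ∪ {ℓ}) = Clause.subst σ Γ ∪ {ℓ.subst σ} := by
  rw [Clause.subst, Set.image_union, Set.image_singleton, Clause.subst]

-- Inside `namespace Sat`, `Clause` would resolve to Mathlib's `Sat.Clause`.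
theorem Sat.subst {V F P D : Type} {I : Interp F P D} {C : _root_.Clause V F P} (h : Sat I C)
    (σ : Subst V F) : Sat I (Clause.subst σ C) := by
  intro ρ
  obtain ⟨ℓ, hℓ, hρ⟩ := h fun x => (σ x).eval I ρ
  exact ⟨ℓ.subst σ, Set.mem_image_of_mem _ hℓ, (Lit.eval_subst I ρ σ ℓ).mpr hρ⟩

theorem Sat.resolve {V F P D : Type} {I : Interp F P D} {A B : _root_.Clause V F P}
    {ℓ : Lit V F P} (hA : Sat I (A ∪ {ℓ.compl})) (hB : Sat I (B ∪ {ℓ})) : Sat I (A ∪ B) := by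
  intro ρ
  obtain ⟨ℓA, hℓA | rfl, hρA⟩ := hA ρ
  · exact ⟨ℓA, Or.inl hℓA, hρA⟩
  obtain ⟨ℓB, hℓB | rfl, hρB⟩ := hB ρ
  · exact ⟨ℓB, Or.inr hℓB, hρB⟩
  exact ((Lit.eval_compl I ρ _).mp hρA hρB).elim

/-- Soundness of the first-order resolution rule. -/
theorem resolution_sound {V F P D : Type} (I : Interp F P D)
    (ΓL ΓR : Clause V F P) (ℓL ℓR : Lit V F P) (σL σR : Subst V F)
    (hcompl : Lit.subst σL ℓL = Lit.compl (Lit.subst σR ℓR))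
    (hL : Sat I (ΓL ∪ {ℓL})) (hR : Sat I (ΓR ∪ {ℓR})) :
    Sat I (Clause.subst σL ΓL ∪ Clause.subst σR ΓR) := by
  have hL' := hL.subst σL
  have hR' := hR.subst σR
  rw [Clause.subst_union_singleton, hcompl] at hL'
  rw [Clause.subst_union_singleton] at hR'
  exact hL'.resolve hR'
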